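/- arXiv:2307.04583 — 2 statements merged into one kernel-verified Lean document; each statement's English description precedes it below -/
import Mathlib

section
/- Let G be a finite simple graph and let u, v be twins of G with uv an edge of G. Then every vertex-irregulator of G contains at least one of u and v. -/
/-- A graph is locally irregular if adjacent vertices have different degrees
(degree = cardinality of the open neighbourhood). -/
def LocallyIrregular {V : Type*} (G : SimpleGraph V) : Prop :=
  ∀ u v : V, G.Adj u v → (G.neighborSet u).ncard ≠ (G.neighborSet v).ncard

/-- A set `S` of vertices is a vertex-irregulator of `G` if the subgraph
induced on the complement of `S` is locally irregular. -/
def IsVertexIrregulator {V : Type*} (G : SimpleGraph V) (S : Set V) : Prop :=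
  LocallyIrregular (G.induce Sᶜ)

/-- A set `S` of edges of `G` is an edge-irregulator of `G` if deleting the
edges of `S` from `G` yields a locally irregular graph. -/
def IsEdgeIrregulator {V : Type*} (G : SimpleGraph V) (S : Set (Sym2 V)) : Prop :=
  S ⊆ G.edgeSet ∧ LocallyIrregular (G.deleteEdges S)

/-- Two vertices are twins if they have the same neighbours apart from
each other. -/
def IsTwinPair {V : Type*} (G : SimpleGraph V) (u v : V) : Prop :=
  G.neighborSet u \ {v} = G.neighborSet v \ {u}

/-- `Iv G` is the minimum cardinality of a vertex-irregulator of `G`. -/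
noncomputable def Iv {V : Type*} (G : SimpleGraph V) : ℕ :=
  sInf {n : ℕ | ∃ S : Set V, S.ncard = n ∧ IsVertexIrregulator G S}

theorem stmt2aux' {V : Type*} [Fintype V] (G : SimpleGraph V) (u v : V)
    (htwin : G.neighborSet u \ {v} = G.neighborSet v \ {u}) (huv : G.Adj u v)
    (S : Set V) (hS : ∀ a b : ↥Sᶜ, (G.induce Sᶜ).Adj a b →
      ((G.induce Sᶜ).neighborSet a).ncard ≠ ((G.induce Sᶜ).neighborSet b).ncard) :
    u ∈ S ∨ v ∈ S := by
  by_contra h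
  push_neg at h
  obtain ⟨hu, hv⟩ := h
  classical
  have hu' : u ∈ Sᶜ := hu
  have hv' : v ∈ Sᶜ := hv
  set U : ↥Sᶜ := ⟨u, hu'⟩
  set W : ↥Sᶜ := ⟨v, hv'⟩
  have hne : U ≠ W := by
    intro h; apply G.ne_of_adj huv; exact congrArg Subtype.val h
  have hadj : (G.induce Sᶜ).Adj U W := huv
  apply hS U W hadj
  have htw : ∀ w : V, w ≠ v → w ≠ u → (G.Adj u w ↔ G.Adj v w) := by
    intro w hwv hwu
    have := Set.ext_iff.mp htwin w
    simp [SimpleGraph.mem_neighborSet, hwv, hwu] at this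
    exact this
  have key : (Equiv.swap U W) '' ((G.induce Sᶜ).neighborSet U)
      = (G.induce Sᶜ).neighborSet W := by
    ext b
    rw [Set.mem_image_equiv, Equiv.symm_swap]
    rcases eq_or_ne b U with rfl | hbU
    · simp [Equiv.swap_apply_left, SimpleGraph.mem_neighborSet]
      constructor
      · intro _; exact huv.symm
      · intro _; exact huv
    · rcases eq_or_ne b W with rfl | hbW
      · simp only [Equiv.swap_apply_right, SimpleGraph.mem_neighborSet,
          (G.induce Sᶜ).irrefl]
      · rw [Equiv.swap_apply_of_ne_of_ne hbU hbW]
        have hbv : (b : V) ≠ v := fun h => hbW (Subtype.ext h)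
        have hbu : (b : V) ≠ u := fun h => hbU (Subtype.ext h)
        simp only [SimpleGraph.mem_neighborSet]
        exact htw b hbv hbu
  rw [← key, Set.ncard_image_of_injective _ (Equiv.swap U W).injective]


theorem stmt2 {V : Type*} [Fintype V] (G : SimpleGraph V) (u v : V)
    (htwin : IsTwinPair G u v) (huv : G.Adj u v)
    (S : Set V) (hS : IsVertexIrregulator G S) :
    u ∈ S ∨ v ∈ S :=
  stmt2aux' G u v htwin huv S hS
end

section
/- Let G be a finite simple graph and let u, v be a pair of adjacent twins of G. Let G' be the graph obtained from G by deleting u. Then I_v(G) = I_v(G') + 1. -/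
lemma li_of_iso {V W : Type*} {G : SimpleGraph V} {H : SimpleGraph W} (φ : G ≃g H)
    (h : LocallyIrregular G) : LocallyIrregular H := by
  intro a b hab
  have h1 : ∀ x : W, (H.neighborSet x).ncard = (G.neighborSet (φ.symm x)).ncard := by
    intro x
    rw [← Nat.card_coe_set_eq, ← Nat.card_coe_set_eq]
    exact Nat.card_congr (φ.symm.mapNeighborSet x)
  rw [h1 a, h1 b]
  exact h _ _ (φ.symm.map_adj_iff.mpr hab)

/-- induce-induce iso -/
noncomputable def induceInduceIso {V : Type*} (G : SimpleGraph V) (A : Set V) (B : Set A) :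
    (G.induce A).induce B ≃g G.induce (Subtype.val '' B) where
  toEquiv := Equiv.Set.image Subtype.val B Subtype.val_injective
  map_rel_iff' := by
    intro a b
    simp [Equiv.Set.image, Equiv.Set.imageOfInjOn, SimpleGraph.comap]

/-- iso transports induced subgraphs -/
noncomputable def induceIsoOfIso {V W : Type*} {G : SimpleGraph V} {H : SimpleGraph W} (φ : G ≃g H)
    (S : Set V) : G.induce S ≃g H.induce (φ '' S) where
  toEquiv := Equiv.image φ.toEquiv S
  map_rel_iff' := by
    intro a b
    simp only [Equiv.image, Equiv.Set.image, Equiv.Set.imageOfInjOn, SimpleGraph.comap,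
      Equiv.coe_fn_mk]
    exact φ.map_adj_iff

lemma twin_adj {V : Type*} {G : SimpleGraph V} {u v : V} (htwin : IsTwinPair G u v)
    {w : V} (hwu : w ≠ u) (hwv : w ≠ v) : G.Adj u w ↔ G.Adj v w := by
  have := Set.ext_iff.mp htwin w
  simp only [Set.mem_diff, SimpleGraph.mem_neighborSet, Set.mem_singleton_iff] at this
  tauto

/-- swap of adjacent twins is an automorphism -/
def twinSwapIso {V : Type*} [DecidableEq V] {G : SimpleGraph V} {u v : V}
    (htwin : IsTwinPair G u v) (huv : G.Adj u v) : G ≃g G where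
  toEquiv := Equiv.swap u v
  map_rel_iff' := by
    have key : ∀ a b : V, G.Adj a b → G.Adj (Equiv.swap u v a) (Equiv.swap u v b) := by
      intro a b hab
      simp only [Equiv.swap_apply_def]
      split_ifs <;> subst_vars <;>
        first
          | exact hab
          | exact hab.symm
          | exact absurd rfl hab.ne
          | exact (twin_adj htwin ‹_› ‹_›).mp hab
          | exact (twin_adj htwin ‹_› ‹_›).mpr hab
          | exact ((twin_adj htwin ‹_› ‹_›).mp hab.symm).symm
          | exact ((twin_adj htwin ‹_› ‹_›).mpr hab.symm).symm
    intro a b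
    constructor
    · intro h
      have := key _ _ h
      simpa using this
    · exact key a b

lemma ncard_neighborSet_induce {V : Type*} (G : SimpleGraph V) (A : Set V) (x : A) :
    ((G.induce A).neighborSet x).ncard = (A ∩ G.neighborSet x.val).ncard := by
  rw [← Nat.card_coe_set_eq, ← Nat.card_coe_set_eq]
  exact Nat.card_congr (Equiv.subtypeSubtypeEquivSubtypeInter _ _)

lemma vac_irregulator {W : Type*} (H : SimpleGraph W) :
    IsVertexIrregulator H (Set.univ : Set W) := by
  intro a b hab
  exact absurd a.2 (by simp)

theorem stmt7 {V : Type*} [Fintype V] (G : SimpleGraph V) (u v : V)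
    (htwin : IsTwinPair G u v) (huv : G.Adj u v) :
    Iv G = Iv (G.induce ({u}ᶜ : Set V)) + 1 := by
  classical
  have hMne : {n : ℕ | ∃ S : Set V, S.ncard = n ∧ IsVertexIrregulator G S}.Nonempty :=
    ⟨(Set.univ : Set V).ncard, Set.univ, rfl, vac_irregulator G⟩
  have hM'ne : {n : ℕ | ∃ S : Set ({u}ᶜ : Set V), S.ncard = n ∧
      IsVertexIrregulator (G.induce ({u}ᶜ : Set V)) S}.Nonempty :=
    ⟨(Set.univ : Set ({u}ᶜ : Set V)).ncard, Set.univ, rfl, vac_irregulator _⟩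
  have hIv : Iv G = sInf {n : ℕ | ∃ S : Set V, S.ncard = n ∧ IsVertexIrregulator G S} := rfl
  have hIv' : Iv (G.induce ({u}ᶜ : Set V)) = sInf {n : ℕ | ∃ S : Set ({u}ᶜ : Set V),
      S.ncard = n ∧ IsVertexIrregulator (G.induce ({u}ᶜ : Set V)) S} := rfl
  -- direction ≤
  have hle : Iv G ≤ Iv (G.induce ({u}ᶜ : Set V)) + 1 := by
    obtain ⟨S', hS'card, hS'⟩ := Nat.sInf_mem hM'ne
    have hcompl : (insert u (Subtype.val '' S'))ᶜ = Subtype.val '' (S'ᶜ) := by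
      ext x
      simp only [Set.mem_compl_iff, Set.mem_insert_iff, Set.mem_image, not_or]
      constructor
      · rintro ⟨hxu, hx⟩
        refine ⟨⟨x, by simpa using hxu⟩, ?_, rfl⟩
        intro hmem
        exact hx ⟨_, hmem, rfl⟩
      · rintro ⟨⟨y, hy⟩, hyS', rfl⟩
        refine ⟨by simpa using hy, ?_⟩
        rintro ⟨z, hz, hzy⟩
        exact hyS' (by rwa [← Subtype.val_injective hzy])
    rw [hIv, hIv'] at *
    refine Nat.sInf_le ⟨insert u (Subtype.val '' S'), ?_, ?_⟩
    · rw [Set.ncard_insert_of_notMem (by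
        rintro ⟨⟨y, hy⟩, -, h⟩
        exact hy h),
        Set.ncard_image_of_injective _ Subtype.val_injective, hS'card]
    · show LocallyIrregular (G.induce (insert u (Subtype.val '' S'))ᶜ)
      rw [hcompl]
      exact li_of_iso (induceInduceIso G ({u}ᶜ : Set V) S'ᶜ) hS'
  -- direction ≥
  have hge : Iv (G.induce ({u}ᶜ : Set V)) + 1 ≤ Iv G := by
    obtain ⟨S, hScard, hSirr⟩ := Nat.sInf_mem hMne
    rw [← hIv] at hScard
    -- u or v belongs to S
    have hmem : u ∈ S ∨ v ∈ S := by
      by_contra hcon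
      push_neg at hcon
      obtain ⟨hu, hv⟩ := hcon
      have hu' : u ∈ Sᶜ := hu
      have hv' : v ∈ Sᶜ := hv
      have hadj : (G.induce Sᶜ).Adj ⟨u, hu'⟩ ⟨v, hv'⟩ := huv
      have hne := hSirr _ _ hadj
      rw [ncard_neighborSet_induce, ncard_neighborSet_induce] at hne
      apply hne
      have emid : (Sᶜ ∩ G.neighborSet u) \ {v} = (Sᶜ ∩ G.neighborSet v) \ {u} := by
        rw [Set.inter_diff_assoc, Set.inter_diff_assoc, htwin]
      have e1 := Set.ncard_diff_singleton_add_one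
        (show v ∈ Sᶜ ∩ G.neighborSet u from ⟨hv', huv⟩) (Set.toFinite _)
      have e2 := Set.ncard_diff_singleton_add_one
        (show u ∈ Sᶜ ∩ G.neighborSet v from ⟨hu', huv.symm⟩) (Set.toFinite _)
      rw [emid] at e1
      show (Sᶜ ∩ G.neighborSet u).ncard = (Sᶜ ∩ G.neighborSet v).ncard
      omega
    -- produce an irregulator of the same size containing u
    obtain ⟨S₀, hu₀, hcard₀, hirr₀⟩ :
        ∃ S₀ : Set V, u ∈ S₀ ∧ S₀.ncard = Iv G ∧ IsVertexIrregulator G S₀ := by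
      rcases hmem with hu | hv
      · exact ⟨S, hu, hScard, hSirr⟩
      · refine ⟨(twinSwapIso htwin huv) '' S, ⟨v, hv, ?_⟩, ?_, ?_⟩
        · show Equiv.swap u v v = u
          simp
        · have hcoe : ⇑(twinSwapIso htwin huv) = ⇑(Equiv.swap u v) := rfl
          rw [hcoe, Set.ncard_image_of_injective _ (Equiv.swap u v).injective]
          exact hScard
        · show LocallyIrregular (G.induce ((twinSwapIso htwin huv) '' S)ᶜ)
          have himg : (twinSwapIso htwin huv) '' Sᶜ = ((twinSwapIso htwin huv) '' S)ᶜ :=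
            Set.image_compl_eq (Equiv.swap u v).bijective
          rw [← himg]
          exact li_of_iso (induceIsoOfIso (twinSwapIso htwin huv) Sᶜ) hSirr
    -- pull back to the smaller graph
    have hsub : S₀ᶜ ⊆ ({u}ᶜ : Set V) := by
      intro x hx
      simp only [Set.mem_compl_iff, Set.mem_singleton_iff]
      rintro rfl
      exact hx hu₀
    have hc : Subtype.val '' ((Subtype.val ⁻¹' S₀ : Set ({u}ᶜ : Set V))ᶜ) = S₀ᶜ := by
      rw [← Set.preimage_compl, Set.image_preimage_eq_inter_range, Subtype.range_coe]
      exact Set.inter_eq_left.mpr hsub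
    have hirr' : IsVertexIrregulator (G.induce ({u}ᶜ : Set V))
        (Subtype.val ⁻¹' S₀ : Set ({u}ᶜ : Set V)) := by
      show LocallyIrregular ((G.induce ({u}ᶜ : Set V)).induce _)
      apply li_of_iso (induceInduceIso G ({u}ᶜ : Set V)
        ((Subtype.val ⁻¹' S₀ : Set ({u}ᶜ : Set V))ᶜ)).symm
      rw [hc]
      exact hirr₀
    have hcard' : (Subtype.val ⁻¹' S₀ : Set ({u}ᶜ : Set V)).ncard + 1 = Iv G := by
      have h1 : (Subtype.val '' (Subtype.val ⁻¹' S₀ : Set ({u}ᶜ : Set V))) = S₀ \ {u} := by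
        rw [Set.image_preimage_eq_inter_range, Subtype.range_coe, ← Set.diff_eq]
      have h2 := Set.ncard_image_of_injective
        (Subtype.val ⁻¹' S₀ : Set ({u}ᶜ : Set V)) (Subtype.val_injective (p := (· ∈ ({u}ᶜ : Set V))))
      rw [h1] at h2
      have h3 := Set.ncard_diff_singleton_add_one hu₀ (Set.toFinite _)
      omega
    have := Nat.sInf_le (s := {n : ℕ | ∃ S : Set ({u}ᶜ : Set V),
        S.ncard = n ∧ IsVertexIrregulator (G.induce ({u}ᶜ : Set V)) S})
        ⟨_, rfl, hirr'⟩
    rw [← hIv'] at this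
    omega
  omega
end
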